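/- Suppose a substitution ζ on A = {1,…,m} has a 'good return word' v, meaning v starts with some letter c and vc occurs as a subword of ζ(b) for every b ∈ A. Then for any substitution ξ, any b, and the matrix entry M^s_{ξ,ζ}(b,c) := Φ_c^{S_ξ^t s}(ζ(b), ω), one has |M^s_{ξ,ζ}(b,c)| ≤ S_ζ^t(b,c) - (1/2)·‖ω|ξ(v)|_s‖²_{ℝ/ℤ}. -/

import Mathlib

open Matrix

/-- Distance from a real number to the nearest integer. -/
noncomputable def distToInt (τ : ℝ) : ℝ := ⨅ k : ℤ, |τ - (k : ℝ)|

/-- Population vector of a word: the number of occurrences of each letter. -/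
def popVec {m : ℕ} (v : List (Fin m)) : Fin m → ℝ := fun a => (v.count a : ℝ)

/-- Substitution matrix: `S ζ a b` is the number of occurrences of `a` in `ζ b`. -/
def subMat {m : ℕ} (ζ : Fin m → List (Fin m)) : Matrix (Fin m) (Fin m) ℝ :=
  fun a b => ((ζ b).count a : ℝ)

/-- `s`-weighted ("tiling") length of a word. -/
def wlen {m : ℕ} (s : Fin m → ℝ) (v : List (Fin m)) : ℝ := ∑ a, popVec v a * s a

/-- Twisted exponential sum `Φ_a^s(v, ω)`. -/
noncomputable def Phi {m : ℕ} (s : Fin m → ℝ) (a : Fin m) (v : List (Fin m)) (ω : ℝ) : ℂ :=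
  ∑ j : Fin v.length, (if v.get j = a then (1 : ℂ) else 0) *
    Complex.exp (-2 * Real.pi * Complex.I * ω * (wlen s (v.take j)))

/-!
Write `ζ(b) = p (v c) q` with `v = c t`. The occurrences of `c` at the start of `v` and right
after it contribute `e(|p|) (1 + e(|v|))` to the exponential sum, where `e(x) = exp(-2πiωx)`
(`phase ω x` below); every other occurrence of `c` contributes a term of modulus one. Since
`|1 + e^{2πiτ}|² = 2 + 2 cos 2πτ ≤ 4 - 16 ‖τ‖²` (Jordan's inequality for the cosine), the pair
loses `‖ω |v|‖² / 2` against the trivial bound `2`. Finally, `|v|` with respect to `S_ξᵀ s` is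
`|ξ(v)|` with respect to `s`.
-/

open Real

noncomputable def phase (ω x : ℝ) : ℂ := Complex.exp (-2 * π * Complex.I * ω * x)

lemma norm_phase (ω x : ℝ) : ‖phase ω x‖ = 1 := by
  rw [phase, Complex.norm_exp]
  simp

lemma phase_add (ω x y : ℝ) : phase ω (x + y) = phase ω x * phase ω y := by
  rw [phase, phase, phase, ← Complex.exp_add]
  push_cast
  ring_nf

lemma sq_norm_one_add_phase (ω x : ℝ) :
    ‖1 + phase ω x‖ ^ 2 = 2 + 2 * cos (2 * π * (ω * x)) := by
  have h : phase ω x = Complex.exp (↑(-(2 * π * (ω * x))) * Complex.I) := by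
    rw [phase]; push_cast; ring_nf
  rw [h, Complex.sq_norm, Complex.normSq_apply]
  simp only [Complex.add_re, Complex.add_im, Complex.one_re, Complex.one_im,
    Complex.exp_ofReal_mul_I_re, Complex.exp_ofReal_mul_I_im, cos_neg, sin_neg]
  nlinarith [sin_sq_add_cos_sq (2 * π * (ω * x))]

lemma distToInt_eq_abs_sub_round (τ : ℝ) : distToInt τ = |τ - round τ| :=
  le_antisymm (ciInf_le ⟨0, by rintro _ ⟨k, rfl⟩; positivity⟩ (round τ))
    (le_ciInf (round_le τ))

lemma cos_two_pi_mul_le (τ : ℝ) : cos (2 * π * τ) ≤ 1 - 8 * distToInt τ ^ 2 := by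
  have ht : |τ - round τ| ≤ 1 / 2 := abs_sub_round τ
  have hperiod : cos (2 * π * τ) = cos (2 * π * (τ - round τ)) := by
    rw [← cos_sub_int_mul_two_pi _ (round τ)]; ring_nf
  have hjordan := cos_le_one_sub_mul_cos_sq (x := 2 * π * (τ - round τ)) (by
    rw [abs_mul, abs_of_pos two_pi_pos]; nlinarith [pi_pos])
  rw [hperiod, distToInt_eq_abs_sub_round, sq_abs]
  convert hjordan using 2
  field_simp
  ring

lemma norm_one_add_phase_le (ω x : ℝ) :
    ‖1 + phase ω x‖ ≤ 2 - 1 / 2 * distToInt (ω * x) ^ 2 := by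
  have hd : distToInt (ω * x) ≤ 1 / 2 := by
    rw [distToInt_eq_abs_sub_round]; exact abs_sub_round _
  have hd₀ : 0 ≤ distToInt (ω * x) := by
    rw [distToInt_eq_abs_sub_round]; positivity
  have hsq : ‖1 + phase ω x‖ ^ 2 ≤ (2 - 1 / 2 * distToInt (ω * x) ^ 2) ^ 2 := by
    rw [sq_norm_one_add_phase]
    nlinarith [cos_two_pi_mul_le (ω * x), pow_nonneg hd₀ 4]
  exact le_of_sq_le_sq hsq (by nlinarith)

section Words

variable {m : ℕ}

lemma wlen_append (s : Fin m → ℝ) (u w : List (Fin m)) :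
    wlen s (u ++ w) = wlen s u + wlen s w := by
  simp only [wlen, popVec, List.count_append, Nat.cast_add, add_mul, Finset.sum_add_distrib]

lemma wlen_singleton (s : Fin m → ℝ) (x : Fin m) : wlen s [x] = s x := by
  simp [wlen, popVec, List.count_singleton]

lemma wlen_cons (s : Fin m → ℝ) (x : Fin m) (w : List (Fin m)) :
    wlen s (x :: w) = s x + wlen s w := by
  rw [← wlen_singleton s x, ← wlen_append, List.singleton_append]

lemma mulVec_transpose_subMat_apply (ξ : Fin m → List (Fin m)) (s : Fin m → ℝ) (x : Fin m) :
    ((subMat ξ)ᵀ *ᵥ s) x = wlen s (ξ x) := by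
  simp [mulVec, dotProduct, subMat, wlen, popVec]

lemma wlen_mulVec_transpose_subMat (ξ : Fin m → List (Fin m)) (s : Fin m → ℝ)
    (w : List (Fin m)) : wlen ((subMat ξ)ᵀ *ᵥ s) w = wlen s (w.flatMap ξ) := by
  induction w with
  | nil => simp [wlen, popVec]
  | cons x w ih =>
    rw [List.flatMap_cons, wlen_append, wlen_cons, ih, mulVec_transpose_subMat_apply]

end Words

section ExponentialSum

variable {m : ℕ} (s : Fin m → ℝ) (a : Fin m) (ω : ℝ)

lemma Phi_cons (x : Fin m) (w : List (Fin m)) :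
    Phi s a (x :: w) ω = (if x = a then 1 else 0) + phase ω (s x) * Phi s a w ω := by
  rw [Phi]
  simp only [List.length_cons]
  rw [Fin.sum_univ_succ, Phi, Finset.mul_sum]
  congr 1
  · simp [wlen, popVec]
    rfl
  · refine Finset.sum_congr rfl fun j _ => ?_
    rw [Fin.val_succ, List.take_succ_cons, List.get_cons_succ', wlen_cons, phase]
    push_cast
    rw [mul_add, Complex.exp_add]
    ring

lemma Phi_append (u w : List (Fin m)) :
    Phi s a (u ++ w) ω = Phi s a u ω + phase ω (wlen s u) * Phi s a w ω := by
  induction u with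
  | nil => simp [Phi, wlen, popVec, phase]
  | cons x u ih =>
    rw [List.cons_append, Phi_cons, ih, Phi_cons, wlen_cons, phase_add]
    ring

lemma norm_Phi_append_le (u w : List (Fin m)) :
    ‖Phi s a (u ++ w) ω‖ ≤ ‖Phi s a u ω‖ + ‖Phi s a w ω‖ := by
  rw [Phi_append]
  refine (norm_add_le _ _).trans_eq ?_
  rw [norm_mul, norm_phase, one_mul]

lemma norm_Phi_le_count (w : List (Fin m)) : ‖Phi s a w ω‖ ≤ w.count a := by
  induction w with
  | nil => simp [Phi]
  | cons x w ih =>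
    rw [Phi_cons, List.count_cons]
    refine (norm_add_le _ _).trans ?_
    rw [norm_mul, norm_phase, one_mul]
    by_cases h : x = a <;> simp [h] <;> linarith

lemma norm_Phi_cons_append_cons_le (t q : List (Fin m)) :
    ‖Phi s a (a :: t ++ a :: q) ω‖ ≤
      ‖1 + phase ω (wlen s (a :: t))‖ + t.count a + q.count a := by
  have hsplit : Phi s a (a :: t ++ a :: q) ω =
      (1 + phase ω (wlen s (a :: t))) + phase ω (s a) * Phi s a t ω +
        phase ω (wlen s (a :: t)) * phase ω (s a) * Phi s a q ω := by
    rw [Phi_append, Phi_cons, Phi_cons, if_pos rfl]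
    ring
  rw [hsplit]
  refine norm_add₃_le.trans (add_le_add (add_le_add le_rfl ?_) ?_)
  · rw [norm_mul, norm_phase, one_mul]
    exact norm_Phi_le_count s a ω t
  · rw [norm_mul, norm_mul, norm_phase, norm_phase, one_mul, one_mul]
    exact norm_Phi_le_count s a ω q

end ExponentialSum

theorem good_return_word_bound_general {m : ℕ} (ζ ξ : Fin m → List (Fin m))
    (s : Fin m → ℝ) (ω : ℝ)
    (v : List (Fin m)) (c : Fin m) (hvc : v.head? = some c)
    (hgood : ∀ b, (v ++ [c]) <:+: ζ b) (b : Fin m) :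
    ‖Phi ((subMat ξ)ᵀ *ᵥ s) c (ζ b) ω‖ ≤
      (subMat ζ) c b - (1 / 2) * (distToInt (ω * wlen s (v.flatMap ξ))) ^ 2 := by
  obtain ⟨t, rfl⟩ := List.head?_eq_some_iff.mp hvc
  obtain ⟨p, q, hζb⟩ := hgood b
  replace hζb : ζ b = p ++ (c :: t ++ c :: q) := by simpa using hζb.symm
  set s' := (subMat ξ)ᵀ *ᵥ s
  have hcount : subMat ζ c b = p.count c + t.count c + q.count c + 2 := by
    simp only [subMat, hζb, List.count_append, List.count_cons_self]
    push_cast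
    ring
  rw [← wlen_mulVec_transpose_subMat, hcount]
  calc ‖Phi s' c (ζ b) ω‖
      ≤ ‖Phi s' c p ω‖ + ‖Phi s' c (c :: t ++ c :: q) ω‖ :=
        hζb ▸ norm_Phi_append_le s' c ω _ _
    _ ≤ p.count c +
          ((2 - 1 / 2 * distToInt (ω * wlen s' (c :: t)) ^ 2) + t.count c + q.count c) := by
        gcongr
        · exact norm_Phi_le_count s' c ω p
        · refine (norm_Phi_cons_append_cons_le s' c ω t q).trans ?_
          gcongr
          exact norm_one_add_phase_le ..
    _ = _ := by ring

theorem good_return_word_bound {m : ℕ} (ζ ξ : Fin m → List (Fin m))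
    (s : Fin m → ℝ) (hs : ∀ i, 0 < s i) (ω : ℝ)
    (v : List (Fin m)) (c : Fin m) (hvc : v.head? = some c)
    (hgood : ∀ b, (v ++ [c]) <:+: ζ b) (b : Fin m) :
    ‖Phi ((subMat ξ)ᵀ *ᵥ s) c (ζ b) ω‖ ≤
      (subMat ζ) c b - (1 / 2) * (distToInt (ω * wlen s (v.flatMap ξ))) ^ 2 :=
  good_return_word_bound_general ζ ξ s ω v c hvc hgood b
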